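/- arXiv:1908.02385 — 5 statements merged into one kernel-verified Lean document; each statement's English description precedes it below -/
import Mathlib

section
/- Let B be a bipartite graph with parts X and Y. Then B has a subgraph B' such that e(B') ≥ e(B)/2, every vertex of X lying in B' has degree at least e(B)/(4|X|) in B', and every vertex of Y lying in B' has degree at least e(B)/(4|Y|) in B'. -/
open SimpleGraph Set

/-- Number of `X`-vertices isolated in `H`. -/
noncomputable def isoCount {V : Type*} (H : SimpleGraph V) (X : Finset V) : ℕ :=
  ({v ∈ (X : Set V) | H.neighborSet v = ∅}).ncard

section aux

variable {V : Type*} [Fintype V]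

lemma neighborSet_mono {H H' : SimpleGraph V} (h : H' ≤ H) (v : V) :
    H'.neighborSet v ⊆ H.neighborSet v := fun _ hw => h hw

lemma isoCount_mono {H H' : SimpleGraph V} (h : H' ≤ H) (X : Finset V) :
    isoCount H X ≤ isoCount H' X := by
  apply Set.ncard_le_ncard _ (Set.toFinite _)
  rintro v ⟨hvX, hv⟩
  exact ⟨hvX, Set.subset_empty_iff.mp (hv ▸ _root_.neighborSet_mono h v)⟩

/-- Deleting the incidence set of a vertex. -/
lemma delete_step (H : SimpleGraph V) (x : V) :
    (H.deleteEdges (H.incidenceSet x)).edgeSet.ncard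
      = H.edgeSet.ncard - (H.neighborSet x).ncard ∧
    (H.deleteEdges (H.incidenceSet x)).neighborSet x = ∅ := by
  classical
  constructor
  · rw [SimpleGraph.edgeSet_deleteEdges,
      Set.ncard_diff (H.incidenceSet_subset x) (Set.toFinite _)]
    congr 1
    have h := Nat.card_congr (H.incidenceSetEquivNeighborSet x)
    rwa [Nat.card_coe_set_eq, Nat.card_coe_set_eq] at h
  · ext w
    simp [SimpleGraph.deleteEdges_adj, SimpleGraph.mem_incidenceSet]

/-- Main cleaning induction. -/
lemma clean_aux (B : SimpleGraph V) (X Y : Finset V) (cX cY : ℚ)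
    (hcX : 0 ≤ cX) (hcY : 0 ≤ cY) :
    ∀ n : ℕ, ∀ H : SimpleGraph V, H ≤ B → H.edgeSet.ncard ≤ n →
    ∃ B' : SimpleGraph V, B' ≤ B ∧
      (H.edgeSet.ncard : ℚ) + cX * isoCount H X + cY * isoCount H Y ≤
        (B'.edgeSet.ncard : ℚ) + cX * isoCount B' X + cY * isoCount B' Y ∧
      (∀ x ∈ X, (B'.neighborSet x).Nonempty → cX ≤ ((B'.neighborSet x).ncard : ℚ)) ∧
      (∀ y ∈ Y, (B'.neighborSet y).Nonempty → cY ≤ ((B'.neighborSet y).ncard : ℚ)) := by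
  intro n
  induction n with
  | zero =>
    intro H hHB hHn
    refine ⟨H, hHB, le_refl _, ?_, ?_⟩ <;>
    · intro v _ hne
      obtain ⟨w, hw⟩ := hne
      exfalso
      have : s(v, w) ∈ H.edgeSet := hw
      have : 0 < H.edgeSet.ncard := (Set.ncard_pos (Set.toFinite _)).mpr ⟨_, this⟩
      omega
  | succ n ih =>
    intro H hHB hHn
    by_cases hx : ∃ x ∈ X, (H.neighborSet x).Nonempty ∧ ((H.neighborSet x).ncard : ℚ) < cX
    · obtain ⟨x, hxX, hxne, hxdeg⟩ := hx
      set H' := H.deleteEdges (H.incidenceSet x) with hH'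
      obtain ⟨hEcard, hNempty⟩ := delete_step H x
      rw [← hH'] at hEcard hNempty
      have hle : H' ≤ H := SimpleGraph.deleteEdges_le _
      have hdegpos : 0 < (H.neighborSet x).ncard :=
        (Set.ncard_pos (Set.toFinite _)).mpr hxne
      have hEpos : 0 < H.edgeSet.ncard := by
        obtain ⟨w, hw⟩ := hxne
        exact (Set.ncard_pos (Set.toFinite _)).mpr ⟨s(x, w), hw⟩
      have hdegle : (H.neighborSet x).ncard ≤ H.edgeSet.ncard := by
        apply Set.ncard_le_ncard_of_injOn (fun w => s(x, w))
        · intro w hw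
          exact hw
        · intro a _ b _ hab
          exact Sym2.congr_right.mp hab
      obtain ⟨B', hB'B, hq, hdX, hdY⟩ := ih H' (hle.trans hHB) (by omega)
      refine ⟨B', hB'B, ?_, hdX, hdY⟩
      refine le_trans ?_ hq
      -- q(H) ≤ q(H')
      have hz1 : (isoCount H X : ℚ) + 1 ≤ isoCount H' X := by
        have hsub : insert x {v ∈ (X : Set V) | H.neighborSet v = ∅}
            ⊆ {v ∈ (X : Set V) | H'.neighborSet v = ∅} := by
          rintro v (rfl | ⟨hvX, hv⟩)
          · exact ⟨hxX, hNempty⟩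
          · exact ⟨hvX, Set.subset_empty_iff.mp (hv ▸ _root_.neighborSet_mono hle v)⟩
        have hnm : x ∉ {v ∈ (X : Set V) | H.neighborSet v = ∅} := by
          rintro ⟨-, h⟩
          exact hxne.ne_empty h
        have := Set.ncard_le_ncard hsub (Set.toFinite _)
        rw [Set.ncard_insert_of_notMem hnm (Set.toFinite _)] at this
        unfold isoCount
        exact_mod_cast this
      have hz2 : (isoCount H Y : ℚ) ≤ isoCount H' Y := by
        exact_mod_cast isoCount_mono hle Y
      have hE : (H.edgeSet.ncard : ℚ) = H'.edgeSet.ncard + (H.neighborSet x).ncard := by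
        rw [hEcard]
        push_cast [Nat.cast_sub hdegle]
        ring
      have h1 : cX * ((isoCount H X : ℚ) + 1) ≤ cX * isoCount H' X :=
        mul_le_mul_of_nonneg_left hz1 hcX
      have h2 : cY * (isoCount H Y : ℚ) ≤ cY * isoCount H' Y :=
        mul_le_mul_of_nonneg_left hz2 hcY
      nlinarith [hxdeg, hE]
    · by_cases hy : ∃ y ∈ Y, (H.neighborSet y).Nonempty ∧ ((H.neighborSet y).ncard : ℚ) < cY
      · obtain ⟨x, hxX, hxne, hxdeg⟩ := hy
        set H' := H.deleteEdges (H.incidenceSet x) with hH'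
        obtain ⟨hEcard, hNempty⟩ := delete_step H x
        rw [← hH'] at hEcard hNempty
        have hle : H' ≤ H := SimpleGraph.deleteEdges_le _
        have hdegpos : 0 < (H.neighborSet x).ncard :=
          (Set.ncard_pos (Set.toFinite _)).mpr hxne
        have hdegle : (H.neighborSet x).ncard ≤ H.edgeSet.ncard := by
          apply Set.ncard_le_ncard_of_injOn (fun w => s(x, w))
          · intro w hw
            exact hw
          · intro a _ b _ hab
            exact Sym2.congr_right.mp hab
        obtain ⟨B', hB'B, hq, hdX, hdY⟩ := ih H' (hle.trans hHB) (by omega)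
        refine ⟨B', hB'B, ?_, hdX, hdY⟩
        refine le_trans ?_ hq
        have hz1 : (isoCount H Y : ℚ) + 1 ≤ isoCount H' Y := by
          have hsub : insert x {v ∈ (Y : Set V) | H.neighborSet v = ∅}
              ⊆ {v ∈ (Y : Set V) | H'.neighborSet v = ∅} := by
            rintro v (rfl | ⟨hvX, hv⟩)
            · exact ⟨hxX, hNempty⟩
            · exact ⟨hvX, Set.subset_empty_iff.mp (hv ▸ _root_.neighborSet_mono hle v)⟩
          have hnm : x ∉ {v ∈ (Y : Set V) | H.neighborSet v = ∅} := by
            rintro ⟨-, h⟩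
            exact hxne.ne_empty h
          have := Set.ncard_le_ncard hsub (Set.toFinite _)
          rw [Set.ncard_insert_of_notMem hnm (Set.toFinite _)] at this
          unfold isoCount
          exact_mod_cast this
        have hz2 : (isoCount H X : ℚ) ≤ isoCount H' X := by
          exact_mod_cast isoCount_mono hle X
        have hE : (H.edgeSet.ncard : ℚ) = H'.edgeSet.ncard + (H.neighborSet x).ncard := by
          rw [hEcard]
          push_cast [Nat.cast_sub hdegle]
          ring
        have h1 : cY * ((isoCount H Y : ℚ) + 1) ≤ cY * isoCount H' Y :=
          mul_le_mul_of_nonneg_left hz1 hcY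
        have h2 : cX * (isoCount H X : ℚ) ≤ cX * isoCount H' X :=
          mul_le_mul_of_nonneg_left hz2 hcX
        nlinarith [hxdeg, hE]
      · push_neg at hx hy
        exact ⟨H, hHB, le_refl _,
          fun x hxX hne => hx x hxX hne,
          fun y hyY hne => hy y hyY hne⟩

end aux

/-- Cleaning lemma: a bipartite graph B with parts X, Y has a subgraph B' with at least
half the edges in which every remaining vertex of X has degree ≥ e(B)/(4|X|) and every
remaining vertex of Y has degree ≥ e(B)/(4|Y|). -/
theorem stmt_0 {V : Type*} [Fintype V] (B : SimpleGraph V) (X Y : Finset V)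
    (hXY : Disjoint X Y)
    (hbip : ∀ e ∈ B.edgeSet, ∃ x ∈ X, ∃ y ∈ Y, e = s(x, y)) :
    ∃ B' : SimpleGraph V, B' ≤ B ∧
      (B.edgeSet.ncard : ℚ) / 2 ≤ (B'.edgeSet.ncard : ℚ) ∧
      (∀ x ∈ X, (B'.neighborSet x).Nonempty →
        (B.edgeSet.ncard : ℚ) / (4 * X.card) ≤ ((B'.neighborSet x).ncard : ℚ)) ∧
      (∀ y ∈ Y, (B'.neighborSet y).Nonempty →
        (B.edgeSet.ncard : ℚ) / (4 * Y.card) ≤ ((B'.neighborSet y).ncard : ℚ)) := by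
  set e : ℚ := (B.edgeSet.ncard : ℚ) with he
  have he0 : 0 ≤ e := by positivity
  set cX : ℚ := e / (4 * X.card) with hcXdef
  set cY : ℚ := e / (4 * Y.card) with hcYdef
  have hcX : 0 ≤ cX := by positivity
  have hcY : 0 ≤ cY := by positivity
  obtain ⟨B', hB'B, hq, hdX, hdY⟩ :=
    clean_aux B X Y cX cY hcX hcY B.edgeSet.ncard B le_rfl le_rfl
  refine ⟨B', hB'B, ?_, hdX, hdY⟩
  -- bound cX * isoCount B' X ≤ e / 4
  have hboundX : cX * (isoCount B' X : ℚ) ≤ e / 4 := by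
    have h1 : (isoCount B' X : ℚ) ≤ X.card := by
      have : isoCount B' X ≤ X.card := by
        unfold isoCount
        have := Set.ncard_le_ncard
          (s := {v ∈ (X : Set V) | B'.neighborSet v = ∅}) (t := (X : Set V))
          (fun v hv => hv.1) (Set.toFinite _)
        simpa [Set.ncard_coe_finset] using this
      exact_mod_cast this
    rcases Nat.eq_zero_or_pos X.card with h0 | hpos
    · have : (isoCount B' X : ℚ) ≤ 0 := by rw [h0] at h1; exact_mod_cast h1
      have hz : (isoCount B' X : ℚ) = 0 := le_antisymm this (by positivity)
      rw [hz, mul_zero]; positivity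
    · have hXc : (0 : ℚ) < X.card := by exact_mod_cast hpos
      calc cX * (isoCount B' X : ℚ) ≤ cX * X.card :=
            mul_le_mul_of_nonneg_left h1 hcX
        _ = e / 4 := by rw [hcXdef]; field_simp
  have hboundY : cY * (isoCount B' Y : ℚ) ≤ e / 4 := by
    have h1 : (isoCount B' Y : ℚ) ≤ Y.card := by
      have : isoCount B' Y ≤ Y.card := by
        unfold isoCount
        have := Set.ncard_le_ncard
          (s := {v ∈ (Y : Set V) | B'.neighborSet v = ∅}) (t := (Y : Set V))
          (fun v hv => hv.1) (Set.toFinite _)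
        simpa [Set.ncard_coe_finset] using this
      exact_mod_cast this
    rcases Nat.eq_zero_or_pos Y.card with h0 | hpos
    · have : (isoCount B' Y : ℚ) ≤ 0 := by rw [h0] at h1; exact_mod_cast h1
      have hz : (isoCount B' Y : ℚ) = 0 := le_antisymm this (by positivity)
      rw [hz, mul_zero]; positivity
    · have hYc : (0 : ℚ) < Y.card := by exact_mod_cast hpos
      calc cY * (isoCount B' Y : ℚ) ≤ cY * Y.card :=
            mul_le_mul_of_nonneg_left h1 hcY
        _ = e / 4 := by rw [hcYdef]; field_simp
  have hq0X : (0 : ℚ) ≤ cX * (isoCount B X : ℚ) := by positivity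
  have hq0Y : (0 : ℚ) ≤ cY * (isoCount B Y : ℚ) := by positivity
  have hB'0 : (0 : ℚ) ≤ (B'.edgeSet.ncard : ℚ) := by positivity
  linarith [hq]
end

section
/- Let 0 < c < 1 be real and m a positive integer. Let G be a bipartite graph with bipartition (X, Y) such that e(G) ≥ c|X||Y| and c|Y| ≥ 2m. Then there exists a set S ⊆ Y with |S| = m such that the number of vertices of X adjacent to every vertex of S is at least (c/2)^m |X|. -/
open Finset

lemma descFac_rec (n k : ℕ) :
    (n + 1).descFactorial (k + 1) = n.descFactorial (k + 1) + (k + 1) * n.descFactorial k := by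
  rcases le_or_gt k n with h | h
  · rw [Nat.succ_descFactorial_succ, Nat.descFactorial_succ, ← Nat.add_mul]
    congr 1
    omega
  · have h1 : n.descFactorial k = 0 := Nat.descFactorial_eq_zero_iff_lt.2 h
    have h2 : n.descFactorial (k + 1) = 0 := Nat.descFactorial_eq_zero_iff_lt.2 (by omega)
    rw [Nat.succ_descFactorial_succ, h1, h2]
    simp

lemma descFac_lower (j a : ℕ) : ∀ b, a ≤ b →
    a.descFactorial (j + 1) + (b - a) * ((j + 1) * a.descFactorial j) ≤ b.descFactorial (j + 1) := by
  intro b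
  induction b with
  | zero => intro h; interval_cases a; simp
  | succ b ih =>
    intro h
    rcases Nat.lt_or_ge a (b + 1) with h' | h'
    · have hab : a ≤ b := by omega
      have := ih hab
      have hmono := Nat.descFactorial_le j hab
      rw [descFac_rec]
      have : (b + 1 - a) = (b - a) + 1 := by omega
      rw [this, Nat.add_mul, Nat.one_mul]
      have := ih hab
      nlinarith [Nat.descFactorial_le j hab]
    · have : a = b + 1 := by omega
      subst this
      simp

lemma descFac_upper (j a : ℕ) : ∀ b, a ≤ b →
    b.descFactorial (j + 1) ≤ a.descFactorial (j + 1) + (b - a) * ((j + 1) * b.descFactorial j) := by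
  intro b
  induction b with
  | zero => intro h; interval_cases a; simp
  | succ b ih =>
    intro h
    rcases Nat.lt_or_ge a (b + 1) with h' | h'
    · have hab : a ≤ b := by omega
      have := ih hab
      have hmono := Nat.descFactorial_le j (Nat.le_succ b)
      rw [descFac_rec]
      have heq : (b + 1 - a) = (b - a) + 1 := by omega
      calc b.descFactorial (j + 1) + (j + 1) * b.descFactorial j
          ≤ (a.descFactorial (j + 1) + (b - a) * ((j + 1) * b.descFactorial j))
            + (j + 1) * b.descFactorial j := by gcongr
        _ ≤ (a.descFactorial (j + 1) + (b - a) * ((j + 1) * (b + 1).descFactorial j))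
            + (j + 1) * (b + 1).descFactorial j := by gcongr
        _ = a.descFactorial (j + 1) + (b + 1 - a) * ((j + 1) * (b + 1).descFactorial j) := by
            rw [heq]; ring
    · have : a = b + 1 := by omega
      subst this
      simp

lemma descFac_tangent (j k d : ℕ) :
    (k.descFactorial (j + 1) : ℝ) + (j + 1) * k.descFactorial j * ((d : ℝ) - k)
      ≤ d.descFactorial (j + 1) := by
  rcases le_total k d with h | h
  · have := descFac_lower j k d h
    have := (Nat.cast_le (α := ℝ)).2 this
    push_cast at this
    rw [Nat.cast_sub h] at this
    nlinarith
  · have := descFac_upper j d k h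
    have := (Nat.cast_le (α := ℝ)).2 this
    push_cast at this
    rw [Nat.cast_sub h] at this
    nlinarith

lemma edge_count {V : Type*} [Fintype V] [DecidableEq V]
    (G : SimpleGraph V) [DecidableRel G.Adj] (X Y : Finset V)
    (hbip : ∀ e ∈ G.edgeSet, ∃ x ∈ X, ∃ y ∈ Y, e = s(x, y)) :
    G.edgeFinset.card ≤ ∑ x ∈ X, (Y.filter (G.Adj x)).card := by
  have hsurj : Set.SurjOn (fun p : V × V => s(p.1, p.2))
      ↑((X ×ˢ Y).filter fun p => G.Adj p.1 p.2) ↑G.edgeFinset := by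
    intro e he
    simp only [coe_filter, Set.mem_image, Set.mem_setOf_eq,
      mem_coe, SimpleGraph.mem_edgeFinset] at he ⊢
    obtain ⟨x, hx, y, hy, rfl⟩ := hbip e he
    rw [SimpleGraph.mem_edgeSet] at he
    exact ⟨(x, y), ⟨by simp [mem_product, hx, hy], he⟩, rfl⟩
  have h1 := Finset.card_le_card_of_surjOn _ hsurj
  refine h1.trans (le_of_eq ?_)
  rw [Finset.card_filter, Finset.sum_product]
  exact Finset.sum_congr rfl fun x _ => (Finset.card_filter _ _).symm

lemma double_count {V : Type*} [Fintype V] [DecidableEq V]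
    (G : SimpleGraph V) [DecidableRel G.Adj] (X Y : Finset V) (m : ℕ) :
    ∑ S ∈ Y.powersetCard m, (X.filter fun x => ∀ y ∈ S, G.Adj x y).card
      = ∑ x ∈ X, ((Y.filter (G.Adj x)).card).choose m := by
  calc ∑ S ∈ Y.powersetCard m, (X.filter fun x => ∀ y ∈ S, G.Adj x y).card
      = ∑ S ∈ Y.powersetCard m, ∑ x ∈ X, if ∀ y ∈ S, G.Adj x y then 1 else 0 :=
        Finset.sum_congr rfl fun S _ => Finset.card_filter _ _
    _ = ∑ x ∈ X, ∑ S ∈ Y.powersetCard m, if ∀ y ∈ S, G.Adj x y then 1 else 0 :=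
        Finset.sum_comm
    _ = ∑ x ∈ X, ((Y.powersetCard m).filter fun S => ∀ y ∈ S, G.Adj x y).card :=
        Finset.sum_congr rfl fun x _ => (Finset.card_filter _ _).symm
    _ = ∑ x ∈ X, ((Y.filter (G.Adj x)).powersetCard m).card := by
        refine Finset.sum_congr rfl fun x _ => ?_
        congr 1
        ext S
        simp only [mem_filter, Finset.mem_powersetCard, Finset.subset_iff, mem_filter]
        aesop
    _ = ∑ x ∈ X, ((Y.filter (G.Adj x)).card).choose m := by
        simp [Finset.card_powersetCard]

set_option maxHeartbeats 1000000 in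
/-- Common-neighbourhood lemma: if a bipartite graph G with parts X, Y has at least
c|X||Y| edges and c|Y| ≥ 2m, then some m-set S ⊆ Y has common neighbourhood of size at
least (c/2)^m |X|. -/
theorem stmt_1 {V : Type*} [Fintype V] [DecidableEq V]
    (G : SimpleGraph V) [DecidableRel G.Adj] (X Y : Finset V)
    (hXY : Disjoint X Y)
    (hbip : ∀ e ∈ G.edgeSet, ∃ x ∈ X, ∃ y ∈ Y, e = s(x, y))
    (c : ℝ) (hc0 : 0 < c) (hc1 : c < 1) (m : ℕ) (hm : 0 < m)
    (he : c * X.card * Y.card ≤ (G.edgeFinset.card : ℝ))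
    (hcY : 2 * m ≤ c * Y.card) :
    ∃ S ⊆ Y, S.card = m ∧
      (c / 2) ^ m * X.card ≤ ((X.filter (fun x => ∀ y ∈ S, G.Adj x y)).card : ℝ) := by
  classical
  set d : V → ℕ := fun x => (Y.filter (G.Adj x)).card with hd
  set t : ℝ := c * Y.card with ht
  -- basic positivity facts
  have hm1 : (1 : ℝ) ≤ m := by exact_mod_cast hm
  have h2t : 2 * (m : ℝ) ≤ t := hcY
  have ht2 : (2 : ℝ) ≤ t := by nlinarith
  have hY0 : (0 : ℝ) < Y.card := by nlinarith [Nat.cast_nonneg (α := ℝ) Y.card]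
  have hmn : m ≤ Y.card := by
    have : (m : ℝ) < Y.card := by nlinarith [Nat.cast_nonneg (α := ℝ) Y.card]
    exact_mod_cast this.le
  set k : ℕ := ⌊t⌋₊ with hk
  have hk_le : (k : ℝ) ≤ t := Nat.floor_le (by positivity)
  have ht_lt : t < k + 1 := Nat.lt_floor_add_one t
  have hkm : 2 * m ≤ k := Nat.le_floor (by exact_mod_cast h2t)
  -- degree sum bound
  have hsum : c * X.card * Y.card ≤ ∑ x ∈ X, (d x : ℝ) := by
    refine he.trans ?_
    rw [← Nat.cast_sum]
    exact_mod_cast edge_count G X Y hbip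
  obtain ⟨j, hj⟩ : ∃ j, m = j + 1 := ⟨m - 1, by omega⟩
  -- convexity (tangent line) bound
  have hconv : (X.card : ℝ) * k.descFactorial m ≤ ∑ x ∈ X, ((d x).descFactorial m : ℝ) := by
    have htan : ∀ x ∈ X,
        (k.descFactorial m : ℝ) + m * k.descFactorial (m - 1) * ((d x : ℝ) - k)
          ≤ (d x).descFactorial m := by
      intro x _
      subst hj
      simpa using descFac_tangent j k (d x)
    have hA := Finset.sum_le_sum htan
    have hB : ∑ x ∈ X, ((k.descFactorial m : ℝ) + m * k.descFactorial (m - 1) * ((d x : ℝ) - k))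
        = (X.card : ℝ) * k.descFactorial m
          + m * k.descFactorial (m - 1) * ((∑ x ∈ X, (d x : ℝ)) - X.card * k) := by
      rw [Finset.sum_add_distrib, Finset.sum_const, ← Finset.mul_sum, Finset.sum_sub_distrib,
        Finset.sum_const]
      push_cast
      ring
    rw [hB] at hA
    have hcoeff : (0 : ℝ) ≤ m * k.descFactorial (m - 1) := by positivity
    have hd_tk : (X.card : ℝ) * k ≤ ∑ x ∈ X, (d x : ℝ) := by
      have : (X.card : ℝ) * k ≤ (X.card : ℝ) * t := by
        have := Nat.cast_nonneg (α := ℝ) X.card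
        nlinarith
      refine this.trans ?_
      calc (X.card : ℝ) * t = c * X.card * Y.card := by rw [ht]; ring
        _ ≤ _ := hsum
    nlinarith
  -- lower bound on descFactorial k m
  have hpow : (t / 2) ^ m * X.card ≤ (X.card : ℝ) * k.descFactorial m := by
    have h1 : ((k + 1 - m : ℕ) : ℝ) ^ m ≤ (k.descFactorial m : ℝ) := by
      exact_mod_cast Nat.pow_sub_le_descFactorial k m
    have hm_k : m ≤ k + 1 := by omega
    have hcast : ((k + 1 - m : ℕ) : ℝ) = (k : ℝ) + 1 - m := by
      push_cast [Nat.cast_sub hm_k]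
      ring
    have h2 : (t / 2) ^ m ≤ ((k : ℝ) + 1 - m) ^ m := by
      apply pow_le_pow_left₀ (by positivity)
      nlinarith
    have h3 : (t / 2) ^ m ≤ (k.descFactorial m : ℝ) := by
      rw [hcast] at h1
      exact h2.trans h1
    rw [mul_comm]
    exact mul_le_mul_of_nonneg_left h3 (Nat.cast_nonneg _)
  -- assemble: average over m-subsets
  have hPne : (Y.powersetCard m).Nonempty := Finset.powersetCard_nonempty.2 hmn
  have hfac : (0 : ℝ) < (m.factorial : ℝ) := by positivity
  have key : ∑ S ∈ Y.powersetCard m, ((c / 2) ^ m * (X.card : ℝ))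
      ≤ ∑ S ∈ Y.powersetCard m, ((X.filter fun x => ∀ y ∈ S, G.Adj x y).card : ℝ) := by
    have hrhs : ∑ S ∈ Y.powersetCard m, ((X.filter fun x => ∀ y ∈ S, G.Adj x y).card : ℝ)
        = ∑ x ∈ X, ((d x).choose m : ℝ) := by
      rw [← Nat.cast_sum, ← Nat.cast_sum]
      exact congrArg (fun z : ℕ => (z : ℝ)) (double_count G X Y m)
    have hlhs : ∑ S ∈ Y.powersetCard m, ((c / 2) ^ m * (X.card : ℝ))
        = (Y.card.choose m : ℝ) * ((c / 2) ^ m * X.card) := by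
      rw [Finset.sum_const, Finset.card_powersetCard, nsmul_eq_mul]
    rw [hrhs, hlhs]
    rw [← mul_le_mul_iff_right₀ hfac]
    have hmulL : (m.factorial : ℝ) * ((Y.card.choose m : ℝ) * ((c / 2) ^ m * X.card))
        = (Y.card.descFactorial m : ℝ) * ((c / 2) ^ m * X.card) := by
      rw [Nat.descFactorial_eq_factorial_mul_choose]
      push_cast
      ring
    have hmulR : (m.factorial : ℝ) * ∑ x ∈ X, ((d x).choose m : ℝ)
        = ∑ x ∈ X, ((d x).descFactorial m : ℝ) := by
      rw [Finset.mul_sum]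
      refine Finset.sum_congr rfl fun x _ => ?_
      rw [Nat.descFactorial_eq_factorial_mul_choose]
      push_cast
      ring
    rw [hmulL, hmulR]
    calc (Y.card.descFactorial m : ℝ) * ((c / 2) ^ m * X.card)
        ≤ ((Y.card : ℝ) ^ m) * ((c / 2) ^ m * X.card) := by
          have := Nat.descFactorial_le_pow Y.card m
          have h0 : (0:ℝ) ≤ (c / 2) ^ m * X.card := by positivity
          have hcast : (Y.card.descFactorial m : ℝ) ≤ (Y.card : ℝ) ^ m := by
            exact_mod_cast this
          nlinarith
      _ = (t / 2) ^ m * X.card := by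
          rw [ht, div_pow, div_pow, mul_pow]
          ring
      _ ≤ (X.card : ℝ) * k.descFactorial m := hpow
      _ ≤ ∑ x ∈ X, ((d x).descFactorial m : ℝ) := hconv
  obtain ⟨S, hSP, hSle⟩ := Finset.exists_le_of_sum_le hPne key
  obtain ⟨hSsub, hScard⟩ := Finset.mem_powersetCard.1 hSP
  exact ⟨S, hSsub, hScard, hSle⟩
end

section
/- Let s ≥ 2 and k ≥ 1 be integers, let S be an s-legged spider whose longest leg has length k, and let R be the set of leaves of S. Then the rooted tree (S, R) is balanced if and only if e(S) ≥ (s−1)k. -/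
/-- Vertex type of the s-legged spider with length vector ℓ: the center (inl) together
with, for each leg i, the vertices at distance p+1 from the center (p : Fin (ℓ i)); the
vertex ⟨i, p⟩ with p + 1 = ℓ i is the leaf of the i-th leg. -/
def SpiderVert (s : ℕ) (ℓ : Fin s → ℕ) := Unit ⊕ (Σ i : Fin s, Fin (ℓ i))

def spiderRel (s : ℕ) (ℓ : Fin s → ℕ) : SpiderVert s ℓ → SpiderVert s ℓ → Prop
  | Sum.inl _, Sum.inr q => q.2.val = 0
  | Sum.inr q, Sum.inr q' => q.1 = q'.1 ∧ q.2.val + 1 = q'.2.val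
  | _, _ => False

/-- The s-legged spider graph with length vector ℓ. -/
def spiderGraph (s : ℕ) (ℓ : Fin s → ℕ) : SimpleGraph (SpiderVert s ℓ) :=
  SimpleGraph.fromRel (spiderRel s ℓ)

/-- The set of leaves of the spider. -/
def spiderLeaves (s : ℕ) (ℓ : Fin s → ℕ) : Set (SpiderVert s ℓ) :=
  {v | ∃ q : Σ i : Fin s, Fin (ℓ i), v = Sum.inr q ∧ q.2.val + 1 = ℓ q.1}

/-- e(A): the number of edges of G with at least one endpoint in A. -/
noncomputable def edgesTouching {V : Type*} (G : SimpleGraph V) (A : Set V) : ℕ :=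
  {e ∈ G.edgeSet | ∃ v ∈ A, v ∈ e}.ncard

/-- (G, R) is balanced: every nonempty A ⊆ V∖R satisfies e(A)/|A| ≥ e(V∖R)/|V∖R|. -/
def IsBalancedRooted {V : Type*} (G : SimpleGraph V) (R : Set V) : Prop :=
  ∀ A : Set V, A ⊆ Rᶜ → A.Nonempty →
    (edgesTouching G Rᶜ : ℚ) / ((Rᶜ : Set V).ncard : ℚ) ≤
      (edgesTouching G A : ℚ) / (A.ncard : ℚ)

attribute [reducible] SpiderVert

namespace SpiderAux

abbrev Idx (s : ℕ) (ℓ : Fin s → ℕ) := Σ i : Fin s, Fin (ℓ i)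

variable {s : ℕ} {ℓ : Fin s → ℕ}

instance : Finite (SpiderVert s ℓ) := by unfold SpiderVert; infer_instance

lemma idx_ext {q q' : Idx s ℓ} (h1 : q.1 = q'.1) (h2 : q.2.val = q'.2.val) : q = q' := by
  rcases q with ⟨i, p⟩
  rcases q' with ⟨j, r⟩
  dsimp at h1 h2
  subst h1
  exact congrArg (Sigma.mk i) (Fin.ext h2)

lemma idx_eq_iff {q q' : Idx s ℓ} : q = q' ↔ q.1 = q'.1 ∧ q.2.val = q'.2.val := by
  constructor
  · rintro rfl; exact ⟨rfl, rfl⟩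
  · rintro ⟨h1, h2⟩; exact idx_ext h1 h2

/-- The parent of the vertex indexed by q. -/
def parentV (q : Idx s ℓ) : SpiderVert s ℓ :=
  if h : q.2.val = 0 then Sum.inl ()
  else Sum.inr ⟨q.1, ⟨q.2.val - 1, by have := q.2.isLt; omega⟩⟩

/-- The edge from q to its parent. -/
def edgeOf (q : Idx s ℓ) : Sym2 (SpiderVert s ℓ) := s(parentV q, Sum.inr q)

lemma parentV_ne (q : Idx s ℓ) : parentV q ≠ Sum.inr q := by
  unfold parentV
  split
  · exact fun h => Sum.inl_ne_inr h
  · intro h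
    have h2 : q.2.val - 1 = q.2.val := (idx_eq_iff.mp (Sum.inr_injective h)).2
    rename_i h0
    omega

lemma adj_iff {v w : SpiderVert s ℓ} : (spiderGraph s ℓ).Adj v w ↔
    ∃ q : Idx s ℓ, (v = parentV q ∧ w = Sum.inr q) ∨ (w = parentV q ∧ v = Sum.inr q) := by
  rw [spiderGraph, SimpleGraph.fromRel_adj]
  constructor
  · rintro ⟨hne, h | h⟩
    · match v, w, h with
      | Sum.inl u, Sum.inr q, h =>
        have h0 : q.2.val = 0 := h
        have hp : parentV q = Sum.inl () := dif_pos h0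
        exact ⟨q, Or.inl ⟨hp.symm, rfl⟩⟩
      | Sum.inr q, Sum.inr q', h =>
        obtain ⟨h1, h2⟩ : q.1 = q'.1 ∧ q.2.val + 1 = q'.2.val := h
        refine ⟨q', Or.inl ⟨?_, rfl⟩⟩
        rw [parentV, dif_neg (show ¬ q'.2.val = 0 by omega)]
        exact congrArg Sum.inr (idx_ext h1 (show q.2.val = q'.2.val - 1 by omega))
    · match v, w, h with
      | Sum.inr q, Sum.inl u, h =>
        have h0 : q.2.val = 0 := h
        have hp : parentV q = Sum.inl () := dif_pos h0
        exact ⟨q, Or.inr ⟨hp.symm, rfl⟩⟩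
      | Sum.inr q', Sum.inr q, h =>
        obtain ⟨h1, h2⟩ : q.1 = q'.1 ∧ q.2.val + 1 = q'.2.val := h
        refine ⟨q', Or.inr ⟨?_, rfl⟩⟩
        rw [parentV, dif_neg (show ¬ q'.2.val = 0 by omega)]
        exact congrArg Sum.inr (idx_ext h1 (show q.2.val = q'.2.val - 1 by omega))
  · rintro ⟨q, ⟨rfl, rfl⟩ | ⟨rfl, rfl⟩⟩
    · refine ⟨parentV_ne q, ?_⟩
      rw [parentV]
      split
      · exact Or.inl (by assumption)
      · rename_i hq0
        exact Or.inl ⟨rfl, show q.2.val - 1 + 1 = q.2.val by omega⟩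
    · refine ⟨fun h => parentV_ne q h.symm, ?_⟩
      rw [parentV]
      split
      · exact Or.inr (by assumption)
      · rename_i hq0
        exact Or.inr ⟨rfl, show q.2.val - 1 + 1 = q.2.val by omega⟩

lemma edgeOf_injective : Function.Injective (edgeOf (s := s) (ℓ := ℓ)) := by
  intro q q' h
  rw [edgeOf, edgeOf, Sym2.eq_iff] at h
  rcases h with ⟨-, h2⟩ | ⟨h1, h2⟩
  · exact Sum.inr_injective h2
  · exfalso
    rw [parentV] at h1 h2
    split at h1
    · exact Sum.inl_ne_inr h1
    · split at h2
      · exact Sum.inr_ne_inl h2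
      · have e1 : q.1 = q'.1 := (idx_eq_iff.mp (Sum.inr_injective h1)).1
        have e2 : q.2.val - 1 = q'.2.val := (idx_eq_iff.mp (Sum.inr_injective h1)).2
        have e3 : q.2.val = q'.2.val - 1 := (idx_eq_iff.mp (Sum.inr_injective h2)).2
        omega

lemma edgeSet_eq : (spiderGraph s ℓ).edgeSet = Set.range (edgeOf (s := s) (ℓ := ℓ)) := by
  ext e
  induction e using Sym2.ind with
  | _ v w =>
    rw [SimpleGraph.mem_edgeSet, adj_iff]
    constructor
    · rintro ⟨q, ⟨rfl, rfl⟩ | ⟨rfl, rfl⟩⟩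
      · exact ⟨q, rfl⟩
      · exact ⟨q, Sym2.eq_swap⟩
    · rintro ⟨q, hq⟩
      rw [edgeOf, Sym2.eq_iff] at hq
      rcases hq with ⟨h1, h2⟩ | ⟨h1, h2⟩
      · exact ⟨q, Or.inl ⟨h1.symm, h2.symm⟩⟩
      · exact ⟨q, Or.inr ⟨h1.symm, h2.symm⟩⟩

/-- Indices of edges touching A. -/
def DSet (A : Set (SpiderVert s ℓ)) : Set (Idx s ℓ) :=
  {q | parentV q ∈ A ∨ Sum.inr q ∈ A}

lemma edgesTouching_eq (A : Set (SpiderVert s ℓ)) :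
    edgesTouching (spiderGraph s ℓ) A = (DSet A).ncard := by
  rw [edgesTouching]
  have himg : {e ∈ (spiderGraph s ℓ).edgeSet | ∃ v ∈ A, v ∈ e} = edgeOf '' (DSet A) := by
    ext e
    simp only [Set.mem_setOf_eq, Set.mem_image, edgeSet_eq, Set.mem_range]
    constructor
    · rintro ⟨⟨q, rfl⟩, v, hv, hve⟩
      refine ⟨q, ?_, rfl⟩
      rw [edgeOf, Sym2.mem_iff] at hve
      rcases hve with rfl | rfl
      · exact Or.inl hv
      · exact Or.inr hv
    · rintro ⟨q, hq, rfl⟩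
      refine ⟨⟨q, rfl⟩, ?_⟩
      rcases hq with h | h
      · exact ⟨parentV q, h, by rw [edgeOf]; simp⟩
      · exact ⟨Sum.inr q, h, by rw [edgeOf]; simp⟩
  rw [himg, Set.ncard_image_of_injective _ edgeOf_injective]

lemma ncard_sigma (P : Idx s ℓ → Prop) :
    {q : Idx s ℓ | P q}.ncard = ∑ i, {p : Fin (ℓ i) | P ⟨i, p⟩}.ncard := by
  classical
  rw [Set.ncard_eq_toFinset_card _ (Set.toFinite _)]
  have : (Set.toFinite {q : Idx s ℓ | P q}).toFinset
      = Finset.univ.sigma (fun i => (Set.toFinite {p : Fin (ℓ i) | P ⟨i, p⟩}).toFinset) := by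
    ext ⟨i, p⟩
    simp
  rw [this, Finset.card_sigma]
  exact Finset.sum_congr rfl fun i _ => (Set.ncard_eq_toFinset_card _ (Set.toFinite _)).symm

lemma inr_mem_leaves_iff {q : Idx s ℓ} :
    Sum.inr q ∈ spiderLeaves s ℓ ↔ q.2.val + 1 = ℓ q.1 := by
  constructor
  · rintro ⟨q', hq', h⟩
    obtain rfl : q = q' := Sum.inr_injective hq'
    exact h
  · intro h
    exact ⟨q, rfl, h⟩

lemma inl_not_mem_leaves : (Sum.inl () : SpiderVert s ℓ) ∉ spiderLeaves s ℓ := by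
  rintro ⟨q, hq, -⟩
  exact Sum.inl_ne_inr hq

lemma parentV_not_leaf (q : Idx s ℓ) : parentV q ∉ spiderLeaves s ℓ := by
  rw [parentV]
  split
  · exact inl_not_mem_leaves
  · rw [inr_mem_leaves_iff]
    intro h
    have h' : q.2.val - 1 + 1 = ℓ q.1 := h
    have := q.2.isLt
    rename_i h0
    omega

lemma DSet_compl_leaves : DSet ((spiderLeaves s ℓ)ᶜ) = Set.univ := by
  ext q
  simp only [DSet, Set.mem_setOf_eq, Set.mem_univ, iff_true]
  exact Or.inl (parentV_not_leaf q)

lemma ncard_univ_fin (m : ℕ) : (Set.univ : Set (Fin m)).ncard = m := by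
  rw [Set.ncard_univ, Nat.card_eq_fintype_card, Fintype.card_fin]

lemma ncard_univ_idx : (Set.univ : Set (Idx s ℓ)).ncard = ∑ i, ℓ i := by
  have h : (Set.univ : Set (Idx s ℓ)) = {q : Idx s ℓ | True} := by ext; simp
  rw [h, ncard_sigma]
  refine Finset.sum_congr rfl fun i _ => ?_
  have h2 : {p : Fin (ℓ i) | True} = (Set.univ : Set (Fin (ℓ i))) := by ext; simp
  rw [h2, ncard_univ_fin]

lemma natCard_vert : Nat.card (SpiderVert s ℓ) = (∑ i, ℓ i) + 1 := by
  have h0 : Nat.card (SpiderVert s ℓ) = Nat.card (Unit ⊕ Idx s ℓ) := rfl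
  have h1 : Nat.card (Idx s ℓ) = ∑ i, ℓ i := by
    rw [← Set.ncard_univ, ncard_univ_idx]
  rw [h0, Nat.card_sum, h1, Nat.card_unique]
  omega

lemma leaves_ncard (hpos : ∀ i, 1 ≤ ℓ i) : (spiderLeaves s ℓ).ncard = s := by
  have hrange : spiderLeaves s ℓ =
      Set.range (fun i : Fin s => (Sum.inr ⟨i, ⟨ℓ i - 1, by have := hpos i; omega⟩⟩ : SpiderVert s ℓ)) := by
    ext v
    constructor
    · rintro ⟨q, rfl, h⟩
      refine ⟨q.1, ?_⟩
      exact congrArg Sum.inr (idx_ext rfl (show ℓ q.1 - 1 = q.2.val by omega))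
    · rintro ⟨i, rfl⟩
      exact ⟨_, rfl, show ℓ i - 1 + 1 = ℓ i by have := hpos i; omega⟩
  rw [hrange, ← Set.image_univ, Set.ncard_image_of_injective _ ?_, ncard_univ_fin]
  intro i j hij
  exact (idx_eq_iff.mp (Sum.inr_injective hij)).1

lemma compl_leaves_ncard (hpos : ∀ i, 1 ≤ ℓ i) :
    ((spiderLeaves s ℓ)ᶜ).ncard = (∑ i, ℓ i) + 1 - s := by
  have h := Set.ncard_add_ncard_compl (spiderLeaves s ℓ)
  rw [leaves_ncard hpos, natCard_vert] at h
  omega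

/-- The child map (junk values at the center and at leaves). -/
def chl (hs : 1 ≤ s) (hpos : ∀ i, 1 ≤ ℓ i) : SpiderVert s ℓ → Idx s ℓ
  | Sum.inl _ => ⟨⟨0, hs⟩, ⟨0, hpos _⟩⟩
  | Sum.inr q => if h : q.2.val + 1 < ℓ q.1 then ⟨q.1, ⟨q.2.val + 1, h⟩⟩ else q

lemma chl_inr (hs : 1 ≤ s) (hpos : ∀ i, 1 ≤ ℓ i) {q : Idx s ℓ}
    (h : q.2.val + 1 < ℓ q.1) : chl hs hpos (Sum.inr q) = ⟨q.1, ⟨q.2.val + 1, h⟩⟩ := by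
  unfold chl
  exact dif_pos h

lemma mem_nonleaf {A : Set (SpiderVert s ℓ)} (hA : A ⊆ (spiderLeaves s ℓ)ᶜ)
    {q : Idx s ℓ} (hq : Sum.inr q ∈ A) : q.2.val + 1 < ℓ q.1 := by
  have h1 : ¬ (q.2.val + 1 = ℓ q.1) := fun h => hA hq (inr_mem_leaves_iff.mpr h)
  have := q.2.isLt
  omega

lemma mem_DSet_of_parent_mem {A : Set (SpiderVert s ℓ)} {q : Idx s ℓ}
    (h : Sum.inr q ∈ A) (hlt : q.2.val + 1 < ℓ q.1) :
    (⟨q.1, ⟨q.2.val + 1, hlt⟩⟩ : Idx s ℓ) ∈ DSet A := by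
  left
  have hp : parentV (⟨q.1, ⟨q.2.val + 1, hlt⟩⟩ : Idx s ℓ)
      = Sum.inr q := by
    have h0 : ¬ ((⟨q.1, ⟨q.2.val + 1, hlt⟩⟩ : Idx s ℓ).2.val = 0) := by
      show ¬ (q.2.val + 1 = 0)
      omega
    rw [parentV, dif_neg h0]
    exact congrArg Sum.inr (idx_ext rfl (show q.2.val + 1 - 1 = q.2.val by omega))
  rw [hp]
  exact h

lemma center_bound (hs : 1 ≤ s) (hpos : ∀ i, 1 ≤ ℓ i) {A : Set (SpiderVert s ℓ)}
    (hA : A ⊆ (spiderLeaves s ℓ)ᶜ) (hc : Sum.inl () ∈ A) :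
    A.ncard + s ≤ (DSet A).ncard + 1 := by
  classical
  have key : ∀ v ∈ (Set.toFinite A).toFinset.erase (Sum.inl ()), ∃ q : Idx s ℓ,
      v = Sum.inr q ∧ Sum.inr q ∈ A ∧ q.2.val + 1 < ℓ q.1 := by
    intro v hv
    obtain ⟨hne, hvF⟩ := Finset.mem_erase.mp hv
    have hvA : v ∈ A := (Set.Finite.mem_toFinset _).mp hvF
    clear hv hvF
    match v with
    | Sum.inl u => exact absurd rfl hne
    | Sum.inr q => exact ⟨q, rfl, hvA, mem_nonleaf hA hvA⟩
  set z : Fin s → Idx s ℓ := fun i => ⟨i, ⟨0, hpos i⟩⟩ with hz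
  have hzinj : Function.Injective z := by
    intro i j h
    exact (idx_eq_iff.mp h).1
  set T1 : Finset (Idx s ℓ) := Finset.univ.image z with hT1
  set T2 : Finset (Idx s ℓ) :=
    ((Set.toFinite A).toFinset.erase (Sum.inl ())).image (chl hs hpos) with hT2
  have hT1card : T1.card = s := by
    rw [hT1, Finset.card_image_of_injective _ hzinj, Finset.card_univ, Fintype.card_fin]
  have hchl : ∀ v ∈ (Set.toFinite A).toFinset.erase (Sum.inl ()),
      ∃ q : Idx s ℓ, ∃ h : q.2.val + 1 < ℓ q.1,
      v = Sum.inr q ∧ Sum.inr q ∈ A ∧ chl hs hpos v = ⟨q.1, ⟨q.2.val + 1, h⟩⟩ := by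
    intro v hv
    obtain ⟨q, rfl, hqA, hlt⟩ := key v hv
    exact ⟨q, hlt, rfl, hqA, chl_inr hs hpos hlt⟩
  have hT2card : T2.card = A.ncard - 1 := by
    have hinj : Set.InjOn (chl hs hpos)
        ((Set.toFinite A).toFinset.erase (Sum.inl ())) := by
      intro v hv w hw hvw
      obtain ⟨q, hq, rfl, -, hcv⟩ := hchl v hv
      obtain ⟨q', hq', rfl, -, hcw⟩ := hchl w hw
      rw [hcv, hcw] at hvw
      obtain ⟨h1, h2⟩ := idx_eq_iff.mp hvw
      have h1' : q.1 = q'.1 := h1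
      have h2' : q.2.val + 1 = q'.2.val + 1 := h2
      exact congrArg Sum.inr (idx_ext h1' (by omega))
    have he : ((Set.toFinite A).toFinset.erase (Sum.inl ())).card
        = (Set.toFinite A).toFinset.card - 1 :=
      Finset.card_erase_of_mem ((Set.Finite.mem_toFinset _).mpr hc)
    have hcF : (Set.toFinite A).toFinset.card = A.ncard :=
      (Set.ncard_eq_toFinset_card _ _).symm
    rw [hT2, Finset.card_image_of_injOn hinj, he, hcF]
  have hdisj : Disjoint T1 T2 := by
    rw [Finset.disjoint_left]
    intro x hx1 hx2
    obtain ⟨i, -, rfl⟩ := Finset.mem_image.mp hx1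
    obtain ⟨v, hv, hcv⟩ := Finset.mem_image.mp hx2
    obtain ⟨q, hq, rfl, -, hc2⟩ := hchl v hv
    rw [hc2] at hcv
    have : q.2.val + 1 = 0 := (idx_eq_iff.mp hcv).2
    omega
  have hsub : T1 ∪ T2 ⊆ (Set.toFinite (DSet A)).toFinset := by
    intro x hx
    rw [Finset.mem_union] at hx
    rw [Set.Finite.mem_toFinset]
    rcases hx with hx | hx
    · obtain ⟨i, -, rfl⟩ := Finset.mem_image.mp hx
      left
      have hp : parentV (z i) = Sum.inl () := dif_pos rfl
      rw [hp]
      exact hc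
    · obtain ⟨v, hv, rfl⟩ := Finset.mem_image.mp hx
      obtain ⟨q, hq, rfl, hqA, hc2⟩ := hchl v hv
      rw [hc2]
      exact mem_DSet_of_parent_mem hqA hq
  have hcard : T1.card + T2.card ≤ (Set.toFinite (DSet A)).toFinset.card := by
    rw [← Finset.card_union_of_disjoint hdisj]
    exact Finset.card_le_card hsub
  have hDcard : (Set.toFinite (DSet A)).toFinset.card = (DSet A).ncard :=
    ((Set.ncard_eq_toFinset_card _ (Set.toFinite _))).symm
  have hA1 : 1 ≤ A.ncard := (Set.ncard_pos (Set.toFinite A)).mpr ⟨_, hc⟩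
  omega

/-- The successor map on a leg (junk at the end). -/
def succF (i : Fin s) (ℓ : Fin s → ℕ) : Fin (ℓ i) → Fin (ℓ i) := fun p =>
  if h : p.val + 1 < ℓ i then ⟨p.val + 1, h⟩ else p

lemma leg_bound {A : Set (SpiderVert s ℓ)} (hA : A ⊆ (spiderLeaves s ℓ)ᶜ) (i : Fin s)
    (hne : {p : Fin (ℓ i) | Sum.inr ⟨i, p⟩ ∈ A}.Nonempty) :
    {p : Fin (ℓ i) | Sum.inr ⟨i, p⟩ ∈ A}.ncard + 1
      ≤ {p : Fin (ℓ i) | (⟨i, p⟩ : Idx s ℓ) ∈ DSet A}.ncard := by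
  classical
  set F : Finset (Fin (ℓ i)) := ({p : Fin (ℓ i) | Sum.inr ⟨i, p⟩ ∈ A}.toFinite).toFinset with hF
  set D : Finset (Fin (ℓ i)) :=
    ({p : Fin (ℓ i) | (⟨i, p⟩ : Idx s ℓ) ∈ DSet A}.toFinite).toFinset with hD
  have hmemF : ∀ p, p ∈ F ↔ Sum.inr (⟨i, p⟩ : Idx s ℓ) ∈ A := by
    intro p; rw [hF, Set.Finite.mem_toFinset]; rfl
  have hFne : F.Nonempty := by
    obtain ⟨p, hp⟩ := hne
    exact ⟨p, (hmemF p).mpr hp⟩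
  have hnl : ∀ p ∈ F, p.val + 1 < ℓ i :=
    fun p hp => mem_nonleaf hA ((hmemF p).mp hp)
  set m : Fin (ℓ i) := F.min' hFne with hm
  have hsucc : ∀ p ∈ F, ∃ h : p.val + 1 < ℓ i, succF i ℓ p = ⟨p.val + 1, h⟩ := by
    intro p hp
    exact ⟨hnl p hp, dif_pos (hnl p hp)⟩
  have hsub : insert m (F.image (succF i ℓ)) ⊆ D := by
    intro x hx
    rw [Finset.mem_insert] at hx
    rw [hD, Set.Finite.mem_toFinset]
    rcases hx with hxm | hx
    · subst hxm
      exact Or.inr ((hmemF _).mp (F.min'_mem hFne))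
    · obtain ⟨p, hp, rfl⟩ := Finset.mem_image.mp hx
      obtain ⟨h, hs2⟩ := hsucc p hp
      rw [hs2]
      exact mem_DSet_of_parent_mem (q := ⟨i, p⟩) ((hmemF p).mp hp) h
  have hnotmem : m ∉ F.image (succF i ℓ) := by
    intro hmem
    obtain ⟨p, hp, hpm⟩ := Finset.mem_image.mp hmem
    obtain ⟨h, hs2⟩ := hsucc p hp
    rw [hs2] at hpm
    have h1 : p.val + 1 = m.val := congrArg Fin.val hpm
    have h2 : m ≤ p := F.min'_le p hp
    have h3 : m.val ≤ p.val := h2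
    omega
  have hinj : Set.InjOn (succF i ℓ) F := by
    intro p hp q hq hpq
    obtain ⟨h1, hs1⟩ := hsucc p hp
    obtain ⟨h2, hs2⟩ := hsucc q hq
    rw [hs1, hs2] at hpq
    have : p.val + 1 = q.val + 1 := congrArg Fin.val hpq
    exact Fin.ext (by omega)
  have hcard : F.card + 1 ≤ D.card := by
    have h1 : (insert m (F.image (succF i ℓ))).card = F.card + 1 := by
      rw [Finset.card_insert_of_notMem hnotmem, Finset.card_image_of_injOn hinj]
    rw [← h1]
    exact Finset.card_le_card hsub
  rw [Set.ncard_eq_toFinset_card _ (Set.toFinite _), Set.ncard_eq_toFinset_card _ (Set.toFinite _)]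
  exact hcard

lemma leg_size (hpos : ∀ i, 1 ≤ ℓ i) {A : Set (SpiderVert s ℓ)}
    (hA : A ⊆ (spiderLeaves s ℓ)ᶜ) (i : Fin s) :
    {p : Fin (ℓ i) | Sum.inr ⟨i, p⟩ ∈ A}.ncard ≤ ℓ i - 1 := by
  have hlf : ℓ i - 1 < ℓ i := by have := hpos i; omega
  have hsub : {p : Fin (ℓ i) | Sum.inr ⟨i, p⟩ ∈ A} ⊆ ({⟨ℓ i - 1, hlf⟩} : Set (Fin (ℓ i)))ᶜ := by
    intro p hp hpeq
    have hpe : p = ⟨ℓ i - 1, hlf⟩ := hpeq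
    have hlt : p.val + 1 < ℓ i := mem_nonleaf hA hp
    rw [hpe] at hlt
    simp at hlt
    omega
  have hcompl : (({⟨ℓ i - 1, hlf⟩} : Set (Fin (ℓ i)))ᶜ).ncard = ℓ i - 1 := by
    have h := Set.ncard_add_ncard_compl ({⟨ℓ i - 1, hlf⟩} : Set (Fin (ℓ i)))
    rw [Set.ncard_singleton, Nat.card_eq_fintype_card, Fintype.card_fin] at h
    omega
  calc {p : Fin (ℓ i) | Sum.inr ⟨i, p⟩ ∈ A}.ncard
      ≤ (({⟨ℓ i - 1, hlf⟩} : Set (Fin (ℓ i)))ᶜ).ncard := Set.ncard_le_ncard hsub (Set.toFinite _)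
    _ = ℓ i - 1 := hcompl

lemma ncard_eq_sum_legs {A : Set (SpiderVert s ℓ)} (hc : Sum.inl () ∉ A) :
    A.ncard = ∑ i, {p : Fin (ℓ i) | Sum.inr ⟨i, p⟩ ∈ A}.ncard := by
  have himg : A = Sum.inr '' {q : Idx s ℓ | Sum.inr q ∈ A} := by
    ext v
    constructor
    · intro hv
      match v with
      | Sum.inl u => exact absurd hv hc
      | Sum.inr q => exact ⟨q, hv, rfl⟩
    · rintro ⟨q, hq, rfl⟩
      exact hq
  calc A.ncard = (Sum.inr '' {q : Idx s ℓ | Sum.inr q ∈ A}).ncard := by rw [← himg]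
    _ = {q : Idx s ℓ | Sum.inr q ∈ A}.ncard :=
        Set.ncard_image_of_injective _ Sum.inr_injective
    _ = ∑ i, {p : Fin (ℓ i) | Sum.inr ⟨i, p⟩ ∈ A}.ncard :=
        ncard_sigma (fun q => Sum.inr q ∈ A)

lemma DSet_ncard_eq_sum (A : Set (SpiderVert s ℓ)) :
    (DSet A).ncard = ∑ i, {p : Fin (ℓ i) | (⟨i, p⟩ : Idx s ℓ) ∈ DSet A}.ncard := by
  exact ncard_sigma (fun q => q ∈ DSet A)

lemma arith_center (N n sv a d : ℕ) (hs : 2 ≤ sv) (hn : n + sv = N + 1)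
    (hd : a + sv ≤ d + 1) (ha : a ≤ n) : N * a ≤ d * n := by
  nlinarith [Nat.mul_le_mul_left n hd, Nat.mul_le_mul_left (sv - 1) ha]

lemma arith_leg (N n sv k a d : ℕ) (hs : 2 ≤ sv) (hk : 1 ≤ k) (hn : n + sv = N + 1)
    (hN : (sv - 1) * k ≤ N) (hak : a ≤ k - 1) (had : a = 0 ∨ a + 1 ≤ d) :
    N * a ≤ d * n := by
  rcases had with rfl | had
  · simp
  · obtain ⟨s', rfl⟩ : ∃ s', sv = s' + 2 := ⟨sv - 2, by omega⟩
    obtain ⟨k', rfl⟩ : ∃ k', k = k' + 1 := ⟨k - 1, by omega⟩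
    have h1 : a ≤ k' := by omega
    have h2 : (s' + 1) * (k' + 1) ≤ N := by
      have : (s' + 2 - 1) = s' + 1 := by omega
      rw [this] at hN
      exact hN
    have h3 : n = N - s' - 1 := by omega
    nlinarith

lemma arith_fwd (N n sv k : ℕ) (hs : 2 ≤ sv) (hk : 2 ≤ k) (hn : n + sv = N + 1)
    (h : N * (k - 1) ≤ k * n) : (sv - 1) * k ≤ N := by
  obtain ⟨s', rfl⟩ : ∃ s', sv = s' + 2 := ⟨sv - 2, by omega⟩
  obtain ⟨k', rfl⟩ : ∃ k', k = k' + 2 := ⟨k - 2, by omega⟩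
  have h1 : (k' + 2 - 1) = k' + 1 := by omega
  rw [h1] at h
  have h2 : (s' + 2 - 1) = s' + 1 := by omega
  rw [h2]
  nlinarith

lemma ncard_compl_singleton_fin {m : ℕ} (x : Fin m) :
    (({x} : Set (Fin m))ᶜ).ncard = m - 1 := by
  have h := Set.ncard_add_ncard_compl ({x} : Set (Fin m))
  rw [Set.ncard_singleton, Nat.card_eq_fintype_card, Fintype.card_fin] at h
  omega

lemma mem_inr_image {P : Idx s ℓ → Prop} {q : Idx s ℓ} :
    (Sum.inr q : SpiderVert s ℓ) ∈ (Sum.inr '' {q' : Idx s ℓ | P q'} : Set (SpiderVert s ℓ))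
      ↔ P q := by
  constructor
  · rintro ⟨q', hq', heq⟩
    obtain rfl := Sum.inr_injective heq
    exact hq'
  · intro h
    exact ⟨q, h, rfl⟩

section Witness

variable (i₀ : Fin s)

/-- The internal vertices of leg i₀. -/
def wSet (ℓ : Fin s → ℕ) (i₀ : Fin s) : Set (SpiderVert s ℓ) :=
  Sum.inr '' {q : Idx s ℓ | q.1 = i₀ ∧ q.2.val + 1 < ℓ i₀}

lemma wSet_subset : wSet ℓ i₀ ⊆ (spiderLeaves s ℓ)ᶜ := by
  rintro v ⟨q, ⟨h1, h2⟩, rfl⟩ hleaf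
  have h3 : q.2.val + 1 = ℓ q.1 := inr_mem_leaves_iff.mp hleaf
  have h4 : ℓ q.1 = ℓ i₀ := congrArg ℓ h1
  omega

lemma wSet_nonempty (h2 : 2 ≤ ℓ i₀) : (wSet ℓ i₀).Nonempty := by
  refine ⟨Sum.inr ⟨i₀, ⟨0, by omega⟩⟩, ⟨i₀, ⟨0, by omega⟩⟩, ?_, rfl⟩
  exact ⟨rfl, show (0 : ℕ) + 1 < ℓ i₀ by omega⟩

lemma wSet_ncard : (wSet ℓ i₀).ncard = ℓ i₀ - 1 := by
  rw [wSet, Set.ncard_image_of_injective _ Sum.inr_injective,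
    ncard_sigma (fun q => q.1 = i₀ ∧ q.2.val + 1 < ℓ i₀)]
  rw [Finset.sum_eq_single_of_mem i₀ (Finset.mem_univ i₀)]
  · rcases (show ℓ i₀ - 1 < ℓ i₀ ∨ ℓ i₀ = 0 by omega) with hlf | hlf
    · have he : {p : Fin (ℓ i₀) | (⟨i₀, p⟩ : Idx s ℓ).1 = i₀ ∧ (⟨i₀, p⟩ : Idx s ℓ).2.val + 1 < ℓ i₀}
          = ({⟨ℓ i₀ - 1, hlf⟩} : Set (Fin (ℓ i₀)))ᶜ := by
        ext p
        have hp := p.isLt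
        constructor
        · rintro ⟨-, h⟩ hpe
          have hv : p.val = ℓ i₀ - 1 := congrArg Fin.val hpe
          have h' : p.val + 1 < ℓ i₀ := h
          omega
        · intro hne
          have hv : p.val ≠ ℓ i₀ - 1 := fun h => hne (Fin.ext h)
          exact ⟨rfl, show p.val + 1 < ℓ i₀ by omega⟩
      rw [he, ncard_compl_singleton_fin]
    · have he : {p : Fin (ℓ i₀) | (⟨i₀, p⟩ : Idx s ℓ).1 = i₀ ∧ (⟨i₀, p⟩ : Idx s ℓ).2.val + 1 < ℓ i₀}
          = ∅ := by
        ext p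
        have hp := p.isLt
        simp only [Set.mem_setOf_eq, Set.mem_empty_iff_false, iff_false]
        rintro ⟨-, h⟩
        have h' : p.val + 1 < ℓ i₀ := h
        omega
      rw [he, Set.ncard_empty]
      omega
  · intro i _ hne
    have he : {p : Fin (ℓ i) | (⟨i, p⟩ : Idx s ℓ).1 = i₀ ∧ (⟨i, p⟩ : Idx s ℓ).2.val + 1 < ℓ i₀}
        = ∅ := by
      ext p
      simp only [Set.mem_setOf_eq, Set.mem_empty_iff_false, iff_false]
      rintro ⟨h1, -⟩
      exact hne h1
    rw [he, Set.ncard_empty]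

lemma DSet_wSet (h2 : 2 ≤ ℓ i₀) : DSet (wSet ℓ i₀) = {q : Idx s ℓ | q.1 = i₀} := by
  ext q
  simp only [DSet, Set.mem_setOf_eq]
  constructor
  · rintro (h | h)
    · rw [parentV] at h
      split at h
      · exfalso
        obtain ⟨q', -, hq'⟩ := h
        exact Sum.inr_ne_inl hq'
      · exact ((mem_inr_image (ℓ := ℓ)).mp h).1
    · exact ((mem_inr_image (ℓ := ℓ)).mp h).1
  · intro h1
    by_cases h0 : q.2.val = 0
    · right
      rw [wSet]
      exact (mem_inr_image (ℓ := ℓ)).mpr ⟨h1, by omega⟩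
    · left
      have hp : parentV q = Sum.inr ⟨q.1, ⟨q.2.val - 1, by have := q.2.isLt; omega⟩⟩ :=
        dif_neg h0
      rw [hp, wSet]
      refine (mem_inr_image (ℓ := ℓ)).mpr ⟨h1, ?_⟩
      show q.2.val - 1 + 1 < ℓ i₀
      have hlt := q.2.isLt
      have h4 : ℓ q.1 = ℓ i₀ := congrArg ℓ h1
      omega

lemma DSet_wSet_ncard (h2 : 2 ≤ ℓ i₀) : (DSet (wSet ℓ i₀)).ncard = ℓ i₀ := by
  rw [DSet_wSet i₀ h2, ncard_sigma (fun q => q.1 = i₀)]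
  rw [Finset.sum_eq_single_of_mem i₀ (Finset.mem_univ i₀)]
  · have he : {p : Fin (ℓ i₀) | (⟨i₀, p⟩ : Idx s ℓ).1 = i₀} = Set.univ := by
      ext p
      simp only [Set.mem_setOf_eq, Set.mem_univ, iff_true]
    rw [he, ncard_univ_fin]
  · intro i _ hne
    have he : {p : Fin (ℓ i) | (⟨i, p⟩ : Idx s ℓ).1 = i₀} = ∅ := by
      ext p
      simp only [Set.mem_setOf_eq, Set.mem_empty_iff_false, iff_false]
      exact fun h => hne h
    rw [he, Set.ncard_empty]

end Witness

end SpiderAux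

open SpiderAux in
/-- An s-legged spider whose longest leg has length k, rooted at its set of leaves, is
balanced if and only if its number of edges Σ ℓᵢ is at least (s−1)k. -/
theorem stmt_3 (s k : ℕ) (hs : 2 ≤ s) (hk : 1 ≤ k) (ℓ : Fin s → ℕ)
    (hpos : ∀ i, 1 ≤ ℓ i) (hle : ∀ i, ℓ i ≤ k) (hmax : ∃ i, ℓ i = k) :
    IsBalancedRooted (spiderGraph s ℓ) (spiderLeaves s ℓ) ↔
      (s - 1) * k ≤ ∑ i, ℓ i := by
  classical
  obtain ⟨i₀, hio⟩ := hmax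
  have hNs : s ≤ ∑ i, ℓ i := by
    calc s = ∑ _i : Fin s, 1 := by simp
      _ ≤ ∑ i, ℓ i := Finset.sum_le_sum (fun i _ => hpos i)
  have hRc_card : ((spiderLeaves s ℓ)ᶜ).ncard = (∑ i, ℓ i) + 1 - s := compl_leaves_ncard hpos
  have heRc : edgesTouching (spiderGraph s ℓ) ((spiderLeaves s ℓ)ᶜ) = ∑ i, ℓ i := by
    rw [edgesTouching_eq, DSet_compl_leaves, ncard_univ_idx]
  have hnpos : 0 < (∑ i, ℓ i) + 1 - s := by omega
  constructor
  · intro hbal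
    by_cases hk2 : 2 ≤ k
    · have h2io : 2 ≤ ℓ i₀ := by omega
      have hb := hbal (wSet ℓ i₀) (wSet_subset i₀) (wSet_nonempty i₀ h2io)
      rw [heRc, hRc_card, edgesTouching_eq, DSet_wSet_ncard i₀ h2io, wSet_ncard] at hb
      rw [div_le_div_iff₀ (by exact_mod_cast hnpos)
        (by exact_mod_cast (show 0 < ℓ i₀ - 1 by omega))] at hb
      have hb' : (∑ i, ℓ i) * (ℓ i₀ - 1) ≤ ℓ i₀ * ((∑ i, ℓ i) + 1 - s) := by
        exact_mod_cast hb
      rw [hio] at hb'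
      exact arith_fwd (∑ i, ℓ i) ((∑ i, ℓ i) + 1 - s) s k hs hk2 (by omega) hb'
    · have hk1 : k = 1 := by omega
      subst hk1
      omega
  · intro hineq A hA hAne
    have haA : 0 < A.ncard := (Set.ncard_pos (Set.toFinite A)).mpr hAne
    rw [heRc, hRc_card, edgesTouching_eq]
    rw [div_le_div_iff₀ (by exact_mod_cast hnpos) (by exact_mod_cast haA)]
    have key : (∑ i, ℓ i) * A.ncard ≤ (DSet A).ncard * ((∑ i, ℓ i) + 1 - s) := by
      by_cases hcA : Sum.inl () ∈ A
      · have h1 := center_bound (by omega) hpos hA hcA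
        have h2 : A.ncard ≤ ((spiderLeaves s ℓ)ᶜ).ncard :=
          Set.ncard_le_ncard hA (Set.toFinite _)
        rw [hRc_card] at h2
        exact arith_center _ _ s _ _ hs (by omega) h1 h2
      · rw [DSet_ncard_eq_sum, ncard_eq_sum_legs hcA, Finset.mul_sum, Finset.sum_mul]
        refine Finset.sum_le_sum fun i _ => ?_
        refine arith_leg _ _ s k _ _ hs hk (by omega) hineq ?_ ?_
        · have hls := leg_size hpos hA i
          have hli := hle i
          omega
        · rcases Set.eq_empty_or_nonempty {p : Fin (ℓ i) | Sum.inr ⟨i, p⟩ ∈ A} with he | hne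
          · left
            rw [he, Set.ncard_empty]
          · exact Or.inr (leg_bound hA i hne)
    exact_mod_cast key
end

section
/- Let G be a graph and let C be a finite family of paths of length j ≥ 2, each with the same ordered pair of endpoints (x, y). Suppose that for every vertex v and every i with 1 ≤ i ≤ j−1, the number of paths in C whose (i+1)-th vertex is v is at most F. Then there exist at least |C| / (j^2 F) paths in C that are pairwise vertex-disjoint outside {x, y}. -/
/-- Lemma 2.4 (abstract form): if C is a family of x,y-paths of length j such that each
vertex occurs as the (i+1)-th vertex (1 ≤ i ≤ j−1) of at most F members, then at least
|C|/(j²F) members of C are pairwise vertex-disjoint outside {x,y}. -/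
theorem stmt_7 {V : Type*} [Fintype V] [DecidableEq V]
    (G : SimpleGraph V) (j : ℕ) (hj : 2 ≤ j) (x y : V) (F : ℕ) (hF : 0 < F)
    (C : Finset (Fin (j + 1) → V))
    (hpath : ∀ p ∈ C, Function.Injective p ∧
      (∀ i : Fin j, G.Adj (p i.castSucc) (p i.succ)) ∧ p 0 = x ∧ p (Fin.last j) = y)
    (hcount : ∀ v : V, ∀ i : Fin (j + 1), 0 < i.val → i.val < j →
      (C.filter (fun p => p i = v)).card ≤ F) :
    ∃ D ⊆ C, (C.card : ℚ) / ((j : ℚ) ^ 2 * F) ≤ (D.card : ℚ) ∧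
      ∀ p ∈ D, ∀ q ∈ D, p ≠ q →
        ∀ a b : Fin (j + 1), p a = q b → p a = x ∨ p a = y := by
  classical
  -- interior indices
  set I : Finset (Fin (j + 1)) := Finset.univ.filter (fun i => 0 < i.val ∧ i.val < j) with hI
  have hIcard : I.card ≤ j := by
    have hsub : I ⊆ (Finset.univ : Finset (Fin (j + 1))).erase 0 := by
      intro i hi
      simp only [hI, Finset.mem_filter] at hi
      simp only [Finset.mem_erase, Finset.mem_univ, and_true]
      intro h
      subst h
      simp at hi
    calc I.card ≤ ((Finset.univ : Finset (Fin (j + 1))).erase 0).card :=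
          Finset.card_le_card hsub
      _ = j := by
          rw [Finset.card_erase_of_mem (Finset.mem_univ _)]
          simp
  -- any index where p differs from both endpoints is interior
  have interior : ∀ p ∈ C, ∀ a : Fin (j + 1), p a ≠ x → p a ≠ y → 0 < a.val ∧ a.val < j := by
    intro p hp a hax hay
    obtain ⟨hinj, -, h0, hl⟩ := hpath p hp
    constructor
    · by_contra h
      push_neg at h
      exact hax (by rw [show a = 0 from Fin.ext (by simp only [Fin.val_zero]; omega)]; exact h0)
    · by_contra h
      push_neg at h
      have hlt := a.isLt
      exact hay (by rw [show a = Fin.last j from Fin.ext (by simp [Fin.last]; omega)]; exact hl)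
  -- the internally disjoint predicate
  set P : Finset (Fin (j + 1) → V) → Prop := fun D =>
    ∀ p ∈ D, ∀ q ∈ D, p ≠ q → ∀ a b : Fin (j + 1), p a = q b → p a = x ∨ p a = y with hP
  set S : Finset (Finset (Fin (j + 1) → V)) := C.powerset.filter P with hS
  have hSne : S.Nonempty := by
    refine ⟨∅, ?_⟩
    simp [hS, hP]
  obtain ⟨D, hDS, hDmax⟩ := S.exists_max_image Finset.card hSne
  simp only [hS, Finset.mem_filter, Finset.mem_powerset] at hDS
  obtain ⟨hDC, hDP⟩ := hDS
  refine ⟨D, hDC, ?_, hDP⟩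
  -- key: every path in C shares an interior vertex with a path in D
  have hkey : ∀ p ∈ C, ∃ q ∈ D, ∃ b ∈ I, ∃ a : Fin (j + 1),
      0 < a.val ∧ a.val < j ∧ p a = q b := by
    intro p hp
    by_cases hpD : p ∈ D
    · refine ⟨p, hpD, ⟨1, by omega⟩, ?_, ⟨1, by omega⟩,
        by simp only [Fin.val_mk]; omega, by simp only [Fin.val_mk]; omega, rfl⟩
      simp only [hI, Finset.mem_filter, Finset.mem_univ, true_and, Fin.val_mk]
      omega
    · have hins : insert p D ∉ S := by
        intro hmem
        have := hDmax _ hmem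
        rw [Finset.card_insert_of_notMem hpD] at this
        omega
      have hnP : ¬ P (insert p D) := by
        intro h
        exact hins (by
          simp only [hS, Finset.mem_filter, Finset.mem_powerset]
          exact ⟨Finset.insert_subset hp hDC, h⟩)
      simp only [hP, not_forall] at hnP
      obtain ⟨p', hp', q', hq', hne, a, b, heq, hnot⟩ := hnP
      push_neg at hnot
      obtain ⟨hnx, hny⟩ := hnot
      rcases Finset.mem_insert.mp hp' with rfl | hp'D
      · have hq'D : q' ∈ D := by
          rcases Finset.mem_insert.mp hq' with rfl | h
          · exact absurd rfl hne
          · exact h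
        have hai := interior p' hp a hnx hny
        have hbi := interior q' (hDC hq'D) b (heq ▸ hnx) (heq ▸ hny)
        exact ⟨q', hq'D, b, by simp only [hI, Finset.mem_filter, Finset.mem_univ, true_and]; exact hbi, a, hai.1, hai.2, heq⟩
      · rcases Finset.mem_insert.mp hq' with rfl | hq'D
        · -- q' = p
          have hai := interior p' (hDC hp'D) a hnx hny
          have hbi := interior q' hp b (heq ▸ hnx) (heq ▸ hny)
          exact ⟨p', hp'D, a, by simp only [hI, Finset.mem_filter, Finset.mem_univ, true_and]; exact hai, b, hbi.1, hbi.2, heq.symm⟩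
        · exfalso
          rcases hDP p' hp'D q' hq'D hne a b heq with h | h
          · exact hnx h
          · exact hny h
  -- the counting
  have hcover : C ⊆ D.biUnion (fun q => I.biUnion (fun b =>
      C.filter (fun p => ∃ a : Fin (j + 1), 0 < a.val ∧ a.val < j ∧ p a = q b))) := by
    intro p hp
    obtain ⟨q, hq, b, hb, a, ha1, ha2, heq⟩ := hkey p hp
    simp only [Finset.mem_biUnion]
    exact ⟨q, hq, b, hb, Finset.mem_filter.mpr ⟨hp, a, ha1, ha2, heq⟩⟩
  have hbound : ∀ q : Fin (j + 1) → V, ∀ b : Fin (j + 1),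
      (C.filter (fun p => ∃ a : Fin (j + 1), 0 < a.val ∧ a.val < j ∧ p a = q b)).card
        ≤ j * F := by
    intro q b
    have hsub : C.filter (fun p => ∃ a : Fin (j + 1), 0 < a.val ∧ a.val < j ∧ p a = q b)
        ⊆ I.biUnion (fun a => C.filter (fun p => p a = q b)) := by
      intro p hp
      obtain ⟨hpC, a, ha1, ha2, heq⟩ := Finset.mem_filter.mp hp
      exact Finset.mem_biUnion.mpr ⟨a, by simp only [hI, Finset.mem_filter, Finset.mem_univ, true_and]; exact ⟨ha1, ha2⟩,
        Finset.mem_filter.mpr ⟨hpC, heq⟩⟩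
    calc _ ≤ (I.biUnion (fun a => C.filter (fun p => p a = q b))).card :=
            Finset.card_le_card hsub
      _ ≤ ∑ a ∈ I, (C.filter (fun p => p a = q b)).card := Finset.card_biUnion_le
      _ ≤ ∑ a ∈ I, F := by
          refine Finset.sum_le_sum fun a ha => ?_
          simp only [hI, Finset.mem_filter] at ha
          exact hcount (q b) a ha.2.1 ha.2.2
      _ = I.card * F := by rw [Finset.sum_const, smul_eq_mul]
      _ ≤ j * F := Nat.mul_le_mul_right F hIcard
  have hnat : C.card ≤ D.card * (j ^ 2 * F) := by
    calc C.card ≤ (D.biUnion (fun q => I.biUnion (fun b =>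
          C.filter (fun p => ∃ a : Fin (j + 1), 0 < a.val ∧ a.val < j ∧ p a = q b)))).card :=
          Finset.card_le_card hcover
      _ ≤ ∑ q ∈ D, (I.biUnion (fun b =>
            C.filter (fun p => ∃ a : Fin (j + 1), 0 < a.val ∧ a.val < j ∧ p a = q b))).card :=
          Finset.card_biUnion_le
      _ ≤ ∑ q ∈ D, ∑ b ∈ I, (C.filter
            (fun p => ∃ a : Fin (j + 1), 0 < a.val ∧ a.val < j ∧ p a = q b)).card :=
          Finset.sum_le_sum fun q _ => Finset.card_biUnion_le
      _ ≤ ∑ q ∈ D, ∑ b ∈ I, j * F :=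
          Finset.sum_le_sum fun q _ => Finset.sum_le_sum fun b _ => hbound q b
      _ = D.card * (I.card * (j * F)) := by simp [Finset.sum_const, mul_assoc]
      _ ≤ D.card * (j ^ 2 * F) := by
          apply Nat.mul_le_mul_left
          calc I.card * (j * F) ≤ j * (j * F) := Nat.mul_le_mul_right _ hIcard
            _ = j ^ 2 * F := by ring
  have hpos : (0 : ℚ) < (j : ℚ) ^ 2 * F := by
    have : (0:ℚ) < (j:ℚ) := by exact_mod_cast (by omega : 0 < j)
    have hF' : (0:ℚ) < (F:ℚ) := by exact_mod_cast hF
    positivity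
  rw [div_le_iff₀ hpos]
  have : (C.card : ℚ) ≤ (D.card : ℚ) * ((j : ℚ) ^ 2 * (F : ℚ)) := by
    exact_mod_cast hnat
  linarith
end

section
/- Let G be a graph, s ≥ 2 an integer, and let S be a finite family of s-legged spiders in G, all with the same leaf vector (x_1, …, x_s) and the same length vector (j_1, …, j_s), where j = j_1 + ⋯ + j_s. Suppose that (a) for each vertex v, at most F members of S have center v, and (b) for each vertex v, each i ∈ [s], and each 1 ≤ ℓ < j_i, at most F members of S contain v on their i-th leg at distance ℓ from x_i. Then there exist at least |S| / (j^2 F) members of S that are pairwise vertex-disjoint outside {x_1, …, x_s}. -/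
/-- Lemma 2.5 (abstract form): if S is a family of s-legged spiders with common leaf
vector x and length vector ℓ such that every vertex is the center of at most F members
and occupies any fixed internal position on any leg of at most F members, then at least
|S|/(j²F) members are pairwise vertex-disjoint outside the leaves, where j = Σ ℓᵢ. -/
theorem stmt_15 {V : Type*} [Fintype V] [DecidableEq V]
    (G : SimpleGraph V) (s : ℕ) (hs : 2 ≤ s)
    (ℓ : Fin s → ℕ) (hℓ : ∀ i, 1 ≤ ℓ i) (x : Fin s → V) (F : ℕ) (hF : 0 < F)
    (S : Finset ((Σ i : Fin s, Fin (ℓ i + 1)) → V))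
    (hspider : ∀ T ∈ S,
      (∀ i i' : Fin s, T ⟨i, 0⟩ = T ⟨i', 0⟩) ∧
      (∀ i : Fin s, T ⟨i, Fin.last (ℓ i)⟩ = x i) ∧
      (∀ i : Fin s, ∀ a : Fin (ℓ i), G.Adj (T ⟨i, a.castSucc⟩) (T ⟨i, a.succ⟩)) ∧
      (∀ (i i' : Fin s) (a : Fin (ℓ i + 1)) (a' : Fin (ℓ i' + 1)),
        T ⟨i, a⟩ = T ⟨i', a'⟩ → (i = i' ∧ a.val = a'.val) ∨ (a.val = 0 ∧ a'.val = 0)))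
    (hcenter : ∀ v : V,
      (S.filter (fun T => T ⟨⟨0, by omega⟩, 0⟩ = v)).card ≤ F)
    (hinternal : ∀ v : V, ∀ i : Fin s, ∀ a : Fin (ℓ i + 1),
      0 < a.val → a.val < ℓ i → (S.filter (fun T => T ⟨i, a⟩ = v)).card ≤ F) :
    ∃ D ⊆ S, (S.card : ℚ) / (((∑ i, ℓ i : ℕ) : ℚ) ^ 2 * (F : ℚ)) ≤ (D.card : ℚ) ∧
      ∀ T ∈ D, ∀ T' ∈ D, T ≠ T' →
        ∀ (a b : Σ i : Fin s, Fin (ℓ i + 1)), T a = T' b → ∃ i, T a = x i := by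
  classical
  set j : ℕ := ∑ i, ℓ i with hj
  have hi0 : (0 : ℕ) < s := by omega
  set i0 : Fin s := ⟨0, hi0⟩ with hi0def
  set e : (Σ i : Fin s, Fin (ℓ i)) → (Σ i : Fin s, Fin (ℓ i + 1)) :=
    fun p => ⟨p.1, p.2.castSucc⟩ with he
  set C : ((Σ i : Fin s, Fin (ℓ i + 1)) → V) → ((Σ i : Fin s, Fin (ℓ i + 1)) → V) → Prop :=
    fun T T' => ∃ a b, T a = T' b ∧ ∀ i, T a ≠ x i with hC
  -- internal positions never take a leaf value
  have hnotleaf : ∀ T ∈ S, ∀ (p : Σ i : Fin s, Fin (ℓ i + 1)), p.2.val < ℓ p.1 →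
      ∀ i, T p ≠ x i := by
    rintro T hT ⟨pi, pa⟩ hp i hEq
    obtain ⟨h1, h2, h3, h4⟩ := hspider T hT
    have h5 := h4 pi i pa (Fin.last (ℓ i)) (by rw [hEq, h2])
    simp only [Fin.val_last] at h5
    rcases h5 with ⟨hii, hv⟩ | ⟨hv, hv'⟩
    · subst hii; simp at hp; omega
    · have := hℓ i; omega
  -- a conflict happens at internal positions on both sides
  have hconf : ∀ T ∈ S, ∀ T' ∈ S, C T T' →
      ∃ p q : Σ i : Fin s, Fin (ℓ i), T (e p) = T' (e q) ∧ ∀ i, T (e p) ≠ x i := by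
    rintro T hT T' hT' ⟨⟨ai, av⟩, ⟨bi, bv⟩, hab, hnl⟩
    have ha : av.val < ℓ ai := by
      by_contra h
      have hv : av = Fin.last (ℓ ai) := Fin.ext (by simp only [Fin.val_last]; omega)
      exact hnl ai (by rw [hv]; exact (hspider T hT).2.1 ai)
    have hb : bv.val < ℓ bi := by
      by_contra h
      have hv : bv = Fin.last (ℓ bi) := Fin.ext (by simp only [Fin.val_last]; omega)
      exact hnl bi (by rw [hab, hv]; exact (hspider T' hT').2.1 bi)
    have ea : e ⟨ai, ⟨av.val, ha⟩⟩ = (⟨ai, av⟩ : Σ i : Fin s, Fin (ℓ i + 1)) := by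
      simp only [he]
      exact congrArg (Sigma.mk ai) (Fin.ext rfl)
    have eb : e ⟨bi, ⟨bv.val, hb⟩⟩ = (⟨bi, bv⟩ : Σ i : Fin s, Fin (ℓ i + 1)) := by
      simp only [he]
      exact congrArg (Sigma.mk bi) (Fin.ext rfl)
    refine ⟨⟨ai, ⟨av.val, ha⟩⟩, ⟨bi, ⟨bv.val, hb⟩⟩, ?_, ?_⟩
    · rw [ea, eb]; exact hab
    · intro i; rw [ea]; exact hnl i
  -- at most F spiders hit a given vertex at a given internal position
  have hcount : ∀ (v : V) (q : Σ i : Fin s, Fin (ℓ i)),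
      (S.filter (fun T' => T' (e q) = v)).card ≤ F := by
    rintro v ⟨qi, qa⟩
    rcases Nat.eq_zero_or_pos qa.val with h0 | h0
    · refine le_trans (Finset.card_le_card ?_) (hcenter v)
      intro T' hT'
      simp only [Finset.mem_filter] at hT' ⊢
      refine ⟨hT'.1, ?_⟩
      have hq : e ⟨qi, qa⟩ = (⟨qi, 0⟩ : Σ i : Fin s, Fin (ℓ i + 1)) := by
        simp only [he]
        exact congrArg (Sigma.mk qi) (Fin.ext (by simp [h0]))
      rw [← hT'.2, hq]
      exact ((hspider T' hT'.1).1 qi i0).symm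
    · exact hinternal v qi (qa.castSucc) (by simpa using h0) (by simp)
  have hjcard : Fintype.card (Σ i : Fin s, Fin (ℓ i)) = j := by
    simp [hj]
  -- degree bound
  have hdeg : ∀ T ∈ S, (S.filter (fun T' => C T T')).card ≤ j ^ 2 * F := by
    intro T hT
    have hsub : S.filter (fun T' => C T T') ⊆
        (Finset.univ : Finset ((Σ i : Fin s, Fin (ℓ i)) × (Σ i : Fin s, Fin (ℓ i)))).biUnion
          (fun pq => S.filter (fun T' => T' (e pq.2) = T (e pq.1))) := by
      intro T' hT'
      simp only [Finset.mem_filter] at hT'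
      obtain ⟨p, q, hpq, _⟩ := hconf T hT T' hT'.1 hT'.2
      simp only [Finset.mem_biUnion]
      exact ⟨(p, q), Finset.mem_univ _, Finset.mem_filter.2 ⟨hT'.1, hpq.symm⟩⟩
    calc (S.filter (fun T' => C T T')).card
        ≤ _ := Finset.card_le_card hsub
      _ ≤ ∑ pq : (Σ i : Fin s, Fin (ℓ i)) × (Σ i : Fin s, Fin (ℓ i)),
            (S.filter (fun T' => T' (e pq.2) = T (e pq.1))).card :=
          Finset.card_biUnion_le
      _ ≤ ∑ _pq : (Σ i : Fin s, Fin (ℓ i)) × (Σ i : Fin s, Fin (ℓ i)), F :=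
          Finset.sum_le_sum (fun pq _ => hcount _ _)
      _ = j ^ 2 * F := by
          rw [Finset.sum_const, smul_eq_mul, Finset.card_univ, Fintype.card_prod, hjcard]
          ring
  -- self conflict
  have hself : ∀ T ∈ S, C T T := by
    intro T hT
    refine ⟨⟨i0, 0⟩, ⟨i0, 0⟩, rfl, ?_⟩
    exact hnotleaf T hT ⟨i0, 0⟩ (by simpa using Nat.lt_of_lt_of_le Nat.zero_lt_one (hℓ i0))
  -- symmetry
  have hsymm : ∀ T T', C T T' → C T' T := by
    rintro T T' ⟨a, b, hab, hnl⟩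
    exact ⟨b, a, hab.symm, fun i h => hnl i (hab ▸ h)⟩
  -- greedy extraction
  have greedy : ∀ n (S' : Finset ((Σ i : Fin s, Fin (ℓ i + 1)) → V)),
      S'.card ≤ n → S' ⊆ S →
      ∃ D, D ⊆ S' ∧ S'.card ≤ D.card * (j ^ 2 * F) ∧
        ∀ T₁ ∈ D, ∀ T₂ ∈ D, T₁ ≠ T₂ → ¬ C T₁ T₂ := by
    intro n
    induction n with
    | zero =>
        intro S' hcard _
        refine ⟨∅, Finset.empty_subset _, ?_, by simp⟩
        simpa using Nat.le_zero.mp hcard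
    | succ n ih =>
        intro S' hcard hsub
        rcases S'.eq_empty_or_nonempty with rfl | ⟨T, hT⟩
        · exact ⟨∅, Finset.empty_subset _, by simp, by simp⟩
        have hTS : T ∈ S := hsub hT
        set S'' := S'.filter (fun T' => ¬ C T T') with hS''
        have hTnot : T ∉ S'' := by
          simp only [hS'', Finset.mem_filter, not_and, not_not]
          exact fun _ => hself T hTS
        have hsub'' : S'' ⊆ S' := Finset.filter_subset _ _
        have hcard'' : S''.card ≤ n := by
          have h1 : S'' ⊆ S'.erase T := fun y hy =>
            Finset.mem_erase.2 ⟨fun h => hTnot (h ▸ hy), hsub'' hy⟩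
          have h2 := Finset.card_le_card h1
          have h3 := Finset.card_erase_of_mem hT
          omega
        obtain ⟨D, hD1, hD2, hD3⟩ := ih S'' hcard'' (hsub''.trans hsub)
        have hTD : T ∉ D := fun h => hTnot (hD1 h)
        refine ⟨insert T D, ?_, ?_, ?_⟩
        · exact Finset.insert_subset hT (hD1.trans hsub'')
        · have hpart : (S'.filter (fun T' => C T T')).card + S''.card = S'.card :=
            Finset.card_filter_add_card_filter_not _
          have hup : (S'.filter (fun T' => C T T')).card ≤ j ^ 2 * F :=
            le_trans (Finset.card_le_card (Finset.filter_subset_filter _ hsub)) (hdeg T hTS)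
          rw [Finset.card_insert_of_notMem hTD, add_mul, one_mul]
          omega
        · intro T₁ hT₁ T₂ hT₂ hne
          rcases Finset.mem_insert.mp hT₁ with h₁ | h₁ <;>
            rcases Finset.mem_insert.mp hT₂ with h₂ | h₂
          · exact absurd (h₁.trans h₂.symm) hne
          · subst h₁
            exact (Finset.mem_filter.mp (hD1 h₂)).2
          · subst h₂
            intro h
            exact (Finset.mem_filter.mp (hD1 h₁)).2 (hsymm _ _ h)
          · exact hD3 T₁ h₁ T₂ h₂ hne
  obtain ⟨D, hD1, hD2, hD3⟩ := greedy S.card S le_rfl Finset.Subset.rfl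
  refine ⟨D, hD1, ?_, ?_⟩
  · have hjpos : 0 < j := by
      have : s ≤ j := by
        calc s = ∑ _i : Fin s, 1 := by simp
          _ ≤ ∑ i, ℓ i := Finset.sum_le_sum (fun i _ => hℓ i)
      omega
    have hpos : (0 : ℚ) < ((j : ℚ)) ^ 2 * F := by positivity
    rw [div_le_iff₀ hpos]
    calc (S.card : ℚ) ≤ (D.card * (j ^ 2 * F) : ℕ) := by exact_mod_cast hD2
      _ = (D.card : ℚ) * ((j : ℚ) ^ 2 * (F : ℚ)) := by push_cast; ring
  · intro T hT T' hT' hne a b hab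
    by_contra hcon
    push_neg at hcon
    exact hD3 T hT T' hT' hne ⟨a, b, hab, hcon⟩
end
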